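/- arXiv:math/0504303 — 4 statements merged into one kernel-verified Lean document; each statement's English description precedes it below -/
import Mathlib

section
/- Let k be a number field and let P ∈ ℙ^1(k). Then there exists a sequence (Q_i) in ℙ^1(k) ∖ {P} with dist(P, Q_i) → 0 and sup_i dist(P, Q_i) · H(Q_i) < ∞; consequently, the approximation constant of P on ℙ^1(k) exists and equals 1. -/
/-!
Liouville side: if `Q ≠ P`, the Plücker coordinate `D = x₀y₁ - x₁y₀` of representatives `x, y`
is a nonzero element of the product of the coordinate ideals of `x` and `y`, so
`|N(D)| ≥ N(x) N(y)`. Since `∏_v |D|_v^{m_v} = |N(D)|`, AM–GM over the archimedean places turns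
this into `dist(P, Q) · H(P) · H(Q) ≥ 1`, which rules out every approximation exponent `< 1`.

Dirichlet side: if `x_j ≠ 0` and `j'` is the other index, the points `Q_n = [n x + x_j e_{j'}]`
have `D = ±x_j²` for all `n` while `|n x + x_j e_{j'}|_v ≥ n |x_j|_v`, so `dist(P, Q_n) ≤ #S / n`;
their coordinates lie in the ideal generated by those of `x`, so `H(Q_n) ≤ (n + 1) H(P)`.
-/

open NumberField Filter Topology

noncomputable section

variable (k : Type*) [Field k] [NumberField k]

/-- The absolute multiplicative Weil height of a coordinate vector over `k`. -/
def vecHeight {ι : Type*} [Fintype ι] (x : ι → k) : ℝ :=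
  ((∏ v : InfinitePlace k, (⨆ j, v (x j)) ^ v.mult) /
      ((FractionalIdeal.absNorm (FractionalIdeal.spanFinset (𝓞 k) Finset.univ x) : ℚ) : ℝ)) ^
    ((Module.finrank ℚ k : ℝ)⁻¹)

/-- The absolute multiplicative Weil height on projective space. -/
def projHeight {m : ℕ} (P : Projectivization k (Fin m → k)) : ℝ :=
  vecHeight k P.rep

/-- The archimedean distance between two points of projective space. -/
def projDist {m : ℕ} (P Q : Projectivization k (Fin m → k)) : ℝ :=
  ∑ v : InfinitePlace k,
    (⨆ p : Fin m × Fin m, v (P.rep p.1 * Q.rep p.2 - P.rep p.2 * Q.rep p.1)) /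
      ((⨆ j, v (P.rep j)) * (⨆ j, v (Q.rep j)))

/-- `α` is the approximation constant of the sequence `Q` with respect to the
point `P`, the distance function `d` and the height function `h`. -/
def IsApproxConst {X : Type*} (d : X → X → ℝ) (h : X → ℝ) (P : X) (Q : ℕ → X) (α : ℝ) : Prop :=
  IsLeast {a : ℝ | 0 ≤ a ∧ ∃ C : ℝ, ∀ i, d P (Q i) ^ a * h (Q i) ≤ C} α

/-- `Q` is a sequence of points distinct from `P` converging to `P`. -/
def ApproxSeq {X : Type*} (d : X → X → ℝ) (P : X) (Q : ℕ → X) : Prop :=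
  (∀ i, Q i ≠ P) ∧ Tendsto (fun i => d P (Q i)) atTop (𝓝 0)

/-- `α` is the approximation constant of `P` on `S`. -/
def IsPointApproxConst {X : Type*} (d : X → X → ℝ) (h : X → ℝ) (S : Set X) (P : X) (α : ℝ) :
    Prop :=
  IsLeast {a : ℝ | ∃ Q : ℕ → X, (∀ i, Q i ∈ S) ∧ ApproxSeq d P Q ∧ IsApproxConst d h P Q a} α

/-- `Q` is a sequence of best approximation to `P` on `S`. -/
def IsBestApproxSeq {X : Type*} (d : X → X → ℝ) (h : X → ℝ) (S : Set X) (P : X) (Q : ℕ → X) :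
    Prop :=
  (∀ i, Q i ∈ S) ∧ ApproxSeq d P Q ∧
    ∃ α : ℝ, IsApproxConst d h P Q α ∧ IsPointApproxConst d h S P α

/-- The set of `k`-points of the line through two points of projective space. -/
def lineThrough {m : ℕ} (P Q : Projectivization k (Fin m → k)) :
    Set (Projectivization k (Fin m → k)) :=
  {R | R.rep ∈ Submodule.span k {P.rep, Q.rep}}

/-- The Plücker height of the line through two distinct points. -/
def plueckerHeight {m : ℕ} (P Q : Projectivization k (Fin m → k)) : ℝ :=
  vecHeight k (fun p : Fin m × Fin m => P.rep p.1 * Q.rep p.2 - P.rep p.2 * Q.rep p.1)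

section Wedge

variable {K : Type*} [Field K]

def wedge (x y : Fin 2 → K) : K := x 0 * y 1 - x 1 * y 0

lemma wedge_smul_left (c : K) (x y : Fin 2 → K) : wedge (c • x) y = c * wedge x y := by
  simp only [wedge, Pi.smul_apply, smul_eq_mul]; ring

lemma wedge_smul_right (c : K) (x y : Fin 2 → K) : wedge x (c • y) = c * wedge x y := by
  simp only [wedge, Pi.smul_apply, smul_eq_mul]; ring

lemma wedge_self (x : Fin 2 → K) : wedge x x = 0 := by
  simp only [wedge]; ring

lemma wedge_smul_add_single_rev (x : Fin 2 → K) (j : Fin 2) (c a : K) :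
    wedge x (c • x + Pi.single j.rev a) = (-1) ^ (j : ℕ) * (x j * a) := by
  fin_cases j <;> simp [wedge] <;> ring

lemma wedge_smul_add_single_rev_ne_zero {x : Fin 2 → K} {j : Fin 2} (hj : x j ≠ 0) (c : K) :
    wedge x (c • x + Pi.single j.rev (x j)) ≠ 0 := by
  rw [wedge_smul_add_single_rev]
  exact mul_ne_zero (pow_ne_zero _ (neg_ne_zero.2 one_ne_zero)) (mul_ne_zero hj hj)

lemma ne_zero_of_wedge_ne_zero {x y : Fin 2 → K} (h : wedge x y ≠ 0) : y ≠ 0 := by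
  rintro rfl
  simp [wedge] at h

lemma exists_smul_eq_of_wedge_eq_zero {x y : Fin 2 → K} (hx : x ≠ 0) (h : wedge x y = 0) :
    ∃ c : K, c • x = y := by
  obtain ⟨j, hj⟩ := Function.ne_iff.mp hx
  refine ⟨y j / x j, funext fun i => ?_⟩
  simp only [wedge] at h
  fin_cases j <;> fin_cases i <;> simp at hj ⊢ <;> field_simp <;> grind

lemma wedge_rep_ne_zero {P Q : Projectivization K (Fin 2 → K)} (h : Q ≠ P) :
    wedge P.rep Q.rep ≠ 0 := by
  intro hD
  obtain ⟨c, hc⟩ := exists_smul_eq_of_wedge_eq_zero P.rep_nonzero hD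
  apply h
  rw [← Q.mk_rep, ← P.mk_rep]
  exact (Projectivization.mk_eq_mk_iff' K _ _ _ _).2 ⟨c, hc⟩

lemma mk_ne_of_wedge_ne_zero (P : Projectivization K (Fin 2 → K)) {z : Fin 2 → K} (hz : z ≠ 0)
    (h : wedge P.rep z ≠ 0) : Projectivization.mk K z hz ≠ P := by
  rintro rfl
  obtain ⟨a, ha⟩ := Projectivization.exists_smul_eq_mk_rep K z hz
  rw [← ha, Units.smul_def, wedge_smul_left, wedge_self, mul_zero] at h
  exact h rfl

end Wedge

section SupNorm

variable {K : Type*} [Field K] {ι : Type*} (v : InfinitePlace K)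

def supNorm (x : ι → K) : ℝ := ⨆ j, v (x j)

lemma le_supNorm [Finite ι] (x : ι → K) (j : ι) : v (x j) ≤ supNorm v x :=
  le_ciSup (f := fun j => v (x j)) (Set.finite_range _).bddAbove j

lemma supNorm_nonneg (x : ι → K) : 0 ≤ supNorm v x :=
  Real.iSup_nonneg fun _ => apply_nonneg _ _

lemma supNorm_pos [Finite ι] {x : ι → K} (hx : x ≠ 0) : 0 < supNorm v x := by
  obtain ⟨j, hj⟩ := Function.ne_iff.mp hx
  exact (InfinitePlace.pos_iff.2 hj).trans_le (le_supNorm v x j)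

lemma supNorm_smul (c : K) (x : ι → K) : supNorm v (c • x) = v c * supNorm v x := by
  simp only [supNorm, Real.mul_iSup_of_nonneg (apply_nonneg v c), Pi.smul_apply, smul_eq_mul,
    map_mul]

end SupNorm

section LocalDist

variable {K : Type*} [Field K] (v : InfinitePlace K)

def localDist (x y : Fin 2 → K) : ℝ := v (wedge x y) / (supNorm v x * supNorm v y)

lemma localDist_nonneg (x y : Fin 2 → K) : 0 ≤ localDist v x y :=
  div_nonneg (apply_nonneg _ _) (mul_nonneg (supNorm_nonneg v x) (supNorm_nonneg v y))

lemma localDist_pos {x y : Fin 2 → K} (hx : x ≠ 0) (hy : y ≠ 0) (h : wedge x y ≠ 0) :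
    0 < localDist v x y :=
  div_pos (InfinitePlace.pos_iff.2 h) (mul_pos (supNorm_pos v hx) (supNorm_pos v hy))

lemma localDist_smul_right {c : K} (hc : c ≠ 0) (x y : Fin 2 → K) :
    localDist v x (c • y) = localDist v x y := by
  rw [localDist, localDist, wedge_smul_right, supNorm_smul, map_mul, mul_left_comm,
    mul_div_mul_left _ _ (InfinitePlace.pos_iff.2 hc).ne']

lemma iSup_apply_pluecker (x y : Fin 2 → K) :
    ⨆ p : Fin 2 × Fin 2, v (x p.1 * y p.2 - x p.2 * y p.1) = v (wedge x y) := by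
  refine le_antisymm (Real.iSup_le (fun ⟨i, j⟩ => ?_) (apply_nonneg _ _))
    (le_ciSup_of_le (Set.finite_range _).bddAbove (0, 1) le_rfl)
  fin_cases i <;> fin_cases j <;> simp [wedge]
  exact (v.1.map_sub _ _).le

end LocalDist

section ProjDist

variable {k}

lemma projDist_eq_sum (P Q : Projectivization k (Fin 2 → k)) :
    projDist k P Q = ∑ v : InfinitePlace k, localDist v P.rep Q.rep := by
  simp only [projDist, iSup_apply_pluecker]
  rfl

lemma projDist_mk (P : Projectivization k (Fin 2 → k)) {z : Fin 2 → k} (hz : z ≠ 0) :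
    projDist k P (Projectivization.mk k z hz) = ∑ v : InfinitePlace k, localDist v P.rep z := by
  obtain ⟨a, ha⟩ := Projectivization.exists_smul_eq_mk_rep k z hz
  simp only [projDist_eq_sum, ← ha, Units.smul_def, localDist_smul_right _ a.ne_zero]

lemma projDist_nonneg (P Q : Projectivization k (Fin 2 → k)) : 0 ≤ projDist k P Q := by
  rw [projDist_eq_sum]
  exact Finset.sum_nonneg fun v _ => localDist_nonneg v _ _

lemma projDist_pos {P Q : Projectivization k (Fin 2 → k)} (h : Q ≠ P) : 0 < projDist k P Q := by
  rw [projDist_eq_sum]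
  exact Finset.sum_pos (fun v _ => localDist_pos v P.rep_nonzero Q.rep_nonzero
    (wedge_rep_ne_zero h)) Finset.univ_nonempty

end ProjDist

namespace FractionalIdeal

open scoped nonZeroDivisors

section SpanFinset

variable {R : Type*} [CommRing R] {K : Type*} [Field K] [Algebra R K] [IsFractionRing R K]

lemma mem_spanFinset_self {ι : Type*} (s : Finset ι) (x : ι → K) {j : ι} (hj : j ∈ s) :
    x j ∈ spanFinset R s x := by
  rw [← mem_coe, spanFinset_coe]
  exact Submodule.subset_span ⟨j, hj, rfl⟩

lemma wedge_mem_spanFinset_mul (x y : Fin 2 → K) :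
    wedge x y ∈ spanFinset R Finset.univ x * spanFinset R Finset.univ y :=
  Submodule.sub_mem (p := ((spanFinset R Finset.univ x * spanFinset R Finset.univ y :
      FractionalIdeal R⁰ K) : Submodule R K))
    (mul_mem_mul (mem_spanFinset_self _ x (Finset.mem_univ 0))
      (mem_spanFinset_self _ y (Finset.mem_univ 1)))
    (mul_mem_mul (mem_spanFinset_self _ x (Finset.mem_univ 1))
      (mem_spanFinset_self _ y (Finset.mem_univ 0)))

lemma spanFinset_natCast_smul_add_single_le {ι : Type*} [Fintype ι] [DecidableEq ι] (n : ℕ)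
    (x : ι → K) (i j : ι) :
    spanFinset R Finset.univ ((n : K) • x + (Pi.single i (x j) : ι → K)) ≤
      spanFinset R Finset.univ x := by
  rw [← coe_le_coe, spanFinset_coe, spanFinset_coe, Submodule.span_le]
  rintro _ ⟨l, -, rfl⟩
  have hx : ∀ m, x m ∈ Submodule.span R (x '' ↑(Finset.univ : Finset ι)) :=
    fun m => Submodule.subset_span ⟨m, by simp, rfl⟩
  refine Submodule.add_mem _ ?_ ?_
  · rw [Pi.smul_apply, Nat.cast_smul_eq_nsmul]
    exact nsmul_mem (hx l) n
  · rw [Pi.single_apply]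
    split_ifs
    exacts [hx j, Submodule.zero_mem _]

end SpanFinset

variable {R : Type*} [CommRing R] [IsDedekindDomain R] [Module.Free ℤ R] [Module.Finite ℤ R]
  {K : Type*} [Field K] [Algebra R K] [IsFractionRing R K]

lemma one_le_absNorm_of_le_one {I : FractionalIdeal R⁰ K} (h0 : I ≠ 0) (h1 : I ≤ 1) :
    1 ≤ absNorm I := by
  obtain ⟨I₀, rfl⟩ := le_one_iff_exists_coeIdeal.mp h1
  have hI₀ : Ideal.absNorm I₀ ≠ 0 := fun h => h0 (by simp [Ideal.absNorm_eq_zero_iff.mp h])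
  rw [coeIdeal_absNorm]
  exact_mod_cast Nat.one_le_iff_ne_zero.mpr hI₀

lemma absNorm_le_absNorm_of_le {I J : FractionalIdeal R⁰ K} (hI : I ≠ 0) (h : I ≤ J) :
    absNorm J ≤ absNorm I := by
  have hJ : J ≠ 0 := fun h0 => hI (le_zero_iff.mp (h0 ▸ h))
  have hJI : J * (J⁻¹ * I) = I := by rw [← mul_assoc, mul_inv_cancel₀ hJ, one_mul]
  have hle : J⁻¹ * I ≤ 1 := by
    simpa only [inv_mul_cancel₀ hJ] using mul_le_mul_right h J⁻¹
  have hne : J⁻¹ * I ≠ 0 := fun h0 => hI (by rw [← hJI, h0, mul_zero])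
  calc absNorm J = absNorm J * 1 := (mul_one _).symm
    _ ≤ absNorm J * absNorm (J⁻¹ * I) :=
        mul_le_mul_of_nonneg_left (one_le_absNorm_of_le_one hne hle) (absNorm_nonneg J)
    _ = absNorm I := by rw [← map_mul, hJI]

end FractionalIdeal

section Height

open FractionalIdeal
open scoped nonZeroDivisors

variable {k} {ι : Type*}

def archNorm (x : ι → k) : ℝ := ∏ v : InfinitePlace k, supNorm v x ^ v.mult

def idealNorm [Fintype ι] (x : ι → k) : ℝ := (absNorm (spanFinset (𝓞 k) Finset.univ x) : ℚ)

lemma vecHeight_eq [Fintype ι] (x : ι → k) :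
    vecHeight k x = (archNorm x / idealNorm x) ^ ((Module.finrank ℚ k : ℝ)⁻¹) := rfl

lemma archNorm_pos [Finite ι] {x : ι → k} (hx : x ≠ 0) : 0 < archNorm x :=
  Finset.prod_pos fun v _ => pow_pos (supNorm_pos v hx) _

lemma spanFinset_ne_zero_of_ne_zero [Fintype ι] {x : ι → k} (hx : x ≠ 0) :
    spanFinset (𝓞 k) Finset.univ x ≠ 0 := by
  obtain ⟨j, hj⟩ := Function.ne_iff.mp hx
  exact spanFinset_ne_zero.mpr ⟨j, Finset.mem_univ j, hj⟩

lemma idealNorm_pos [Fintype ι] {x : ι → k} (hx : x ≠ 0) : 0 < idealNorm x := by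
  have h : absNorm (spanFinset (𝓞 k) Finset.univ x) ≠ 0 :=
    fun h0 => spanFinset_ne_zero_of_ne_zero hx (absNorm_eq_zero_iff.mp h0)
  exact Rat.cast_pos.mpr ((absNorm_nonneg _).lt_of_ne' h)

lemma vecHeight_pos [Fintype ι] {x : ι → k} (hx : x ≠ 0) : 0 < vecHeight k x :=
  Real.rpow_pos_of_pos (div_pos (archNorm_pos hx) (idealNorm_pos hx)) _

lemma idealNorm_le_idealNorm [Fintype ι] {x y : ι → k} (hy : y ≠ 0)
    (h : spanFinset (𝓞 k) Finset.univ y ≤ spanFinset (𝓞 k) Finset.univ x) :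
    idealNorm x ≤ idealNorm y :=
  Rat.cast_le.mpr (absNorm_le_absNorm_of_le (spanFinset_ne_zero_of_ne_zero hy) h)

lemma archNorm_smul (c : k) (x : ι → k) :
    archNorm (c • x) = |(Algebra.norm ℚ c : ℝ)| * archNorm x := by
  simp only [archNorm, supNorm_smul, mul_pow, Finset.prod_mul_distrib,
    InfinitePlace.prod_eq_abs_norm, Rat.cast_abs]

lemma spanFinset_smul [Fintype ι] (c : k) (x : ι → k) :
    spanFinset (𝓞 k) Finset.univ (c • x) =
      spanSingleton (𝓞 k)⁰ c * spanFinset (𝓞 k) Finset.univ x := by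
  rw [← coeToSubmodule_inj, coe_mul, spanFinset_coe, spanFinset_coe, coe_spanSingleton,
    Submodule.span_mul_span, Set.singleton_mul, Set.image_image]
  rfl

lemma idealNorm_smul [Fintype ι] (c : k) (x : ι → k) :
    idealNorm (c • x) = |(Algebra.norm ℚ c : ℝ)| * idealNorm x := by
  rw [idealNorm, idealNorm, spanFinset_smul, map_mul, absNorm_span_singleton]
  push_cast
  rfl

lemma vecHeight_smul [Fintype ι] {c : k} (hc : c ≠ 0) (x : ι → k) :
    vecHeight k (c • x) = vecHeight k x := by
  have hN : |(Algebra.norm ℚ c : ℝ)| ≠ 0 := by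
    simpa using (Algebra.norm_ne_zero_iff (R := ℚ)).mpr hc
  rw [vecHeight_eq, vecHeight_eq, archNorm_smul, idealNorm_smul, mul_div_mul_left _ _ hN]

lemma vecHeight_le_mul_vecHeight [Fintype ι] {x y : ι → k} (hy : y ≠ 0) {t : ℝ} (ht : 0 ≤ t)
    (hsup : ∀ v, supNorm v y ≤ t * supNorm v x)
    (hspan : spanFinset (𝓞 k) Finset.univ y ≤ spanFinset (𝓞 k) Finset.univ x) :
    vecHeight k y ≤ t * vecHeight k x := by
  have hd : Module.finrank ℚ k ≠ 0 := Module.finrank_pos.ne'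
  have harch : archNorm y ≤ t ^ Module.finrank ℚ k * archNorm x := calc
    archNorm y ≤ ∏ v : InfinitePlace k, (t * supNorm v x) ^ v.mult :=
      Finset.prod_le_prod (fun v _ => pow_nonneg (supNorm_nonneg v y) _)
        (fun v _ => pow_le_pow_left₀ (supNorm_nonneg v y) (hsup v) _)
    _ = t ^ Module.finrank ℚ k * archNorm x := by
      rw [archNorm, ← InfinitePlace.sum_mult_eq, ← Finset.prod_pow_eq_pow_sum,
        ← Finset.prod_mul_distrib]
      simp only [mul_pow]
  have hx : x ≠ 0 := by
    rintro rfl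
    refine spanFinset_ne_zero_of_ne_zero hy (FractionalIdeal.le_zero_iff.mp ?_)
    rwa [(spanFinset_eq_zero (f := (0 : ι → k))).mpr fun _ _ => rfl] at hspan
  calc vecHeight k y
      ≤ (t ^ Module.finrank ℚ k * (archNorm x / idealNorm x)) ^ ((Module.finrank ℚ k : ℝ)⁻¹) := by
        rw [vecHeight_eq, ← mul_div_assoc]
        refine Real.rpow_le_rpow (div_nonneg (archNorm_pos hy).le (idealNorm_pos hy).le) ?_
          (by positivity)
        exact div_le_div₀ (by have := archNorm_pos hx; positivity) harch (idealNorm_pos hx)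
          (idealNorm_le_idealNorm hy hspan)
    _ = t * vecHeight k x := by
        rw [Real.mul_rpow (by positivity) (div_nonneg (archNorm_pos hx).le (idealNorm_pos hx).le),
          Real.pow_rpow_inv_natCast ht hd, vecHeight_eq]

lemma projHeight_pos {m : ℕ} (P : Projectivization k (Fin m → k)) : 0 < projHeight k P :=
  vecHeight_pos P.rep_nonzero

lemma projHeight_mk {m : ℕ} {z : Fin m → k} (hz : z ≠ 0) :
    projHeight k (Projectivization.mk k z hz) = vecHeight k z := by
  obtain ⟨a, ha⟩ := Projectivization.exists_smul_eq_mk_rep k z hz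
  rw [projHeight, ← ha, Units.smul_def, vecHeight_smul a.ne_zero]

end Height

section Liouville

open FractionalIdeal
open scoped nonZeroDivisors

variable {k}

lemma rpow_prod_pow_mult_le_sum (f : InfinitePlace k → ℝ) (hf : ∀ v, 0 ≤ f v) :
    (∏ v, f v ^ v.mult) ^ ((Module.finrank ℚ k : ℝ)⁻¹) ≤ ∑ v, f v := by
  have hS : 0 ≤ ∑ v, f v := Finset.sum_nonneg fun v _ => hf v
  calc (∏ v, f v ^ v.mult) ^ ((Module.finrank ℚ k : ℝ)⁻¹)
      ≤ ((∑ v, f v) ^ Module.finrank ℚ k) ^ ((Module.finrank ℚ k : ℝ)⁻¹) := by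
        refine Real.rpow_le_rpow (Finset.prod_nonneg fun v _ => pow_nonneg (hf v) _) ?_
          (by positivity)
        rw [← InfinitePlace.sum_mult_eq, ← Finset.prod_pow_eq_pow_sum]
        exact Finset.prod_le_prod (fun v _ => pow_nonneg (hf v) _) fun v _ =>
          pow_le_pow_left₀ (hf v) (Finset.single_le_sum (fun w _ => hf w) (Finset.mem_univ v)) _
    _ = ∑ v, f v := Real.pow_rpow_inv_natCast hS Module.finrank_pos.ne'

lemma idealNorm_mul_idealNorm_le_abs_norm_wedge {x y : Fin 2 → k} (h : wedge x y ≠ 0) :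
    idealNorm x * idealNorm y ≤ |(Algebra.norm ℚ (wedge x y) : ℝ)| := by
  have hle : spanSingleton (𝓞 k)⁰ (wedge x y) ≤
      spanFinset (𝓞 k) Finset.univ x * spanFinset (𝓞 k) Finset.univ y :=
    spanSingleton_le_iff_mem.mpr (wedge_mem_spanFinset_mul x y)
  have hnorm := absNorm_le_absNorm_of_le (spanSingleton_ne_zero_iff.mpr h) hle
  rw [map_mul, absNorm_span_singleton] at hnorm
  rw [idealNorm, idealNorm, ← Rat.cast_mul, ← Rat.cast_abs]
  exact_mod_cast hnorm

lemma inv_vecHeight_mul_vecHeight_le_sum_localDist {x y : Fin 2 → k} (hx : x ≠ 0) (hy : y ≠ 0)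
    (h : wedge x y ≠ 0) : (vecHeight k x * vecHeight k y)⁻¹ ≤ ∑ v, localDist v x y := by
  have hAx := archNorm_pos hx
  have hAy := archNorm_pos hy
  have hNx := idealNorm_pos hx
  have hNy := idealNorm_pos hy
  have hprod : ∏ v, localDist v x y ^ v.mult =
      |(Algebra.norm ℚ (wedge x y) : ℝ)| / (archNorm x * archNorm y) := by
    simp only [localDist, div_pow, mul_pow, Finset.prod_div_distrib, Finset.prod_mul_distrib,
      InfinitePlace.prod_eq_abs_norm, Rat.cast_abs]
    rfl
  calc (vecHeight k x * vecHeight k y)⁻¹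
      = (idealNorm x * idealNorm y / (archNorm x * archNorm y)) ^ ((Module.finrank ℚ k : ℝ)⁻¹) := by
        rw [vecHeight_eq, vecHeight_eq, ← Real.mul_rpow (by positivity) (by positivity),
          ← Real.inv_rpow (by positivity)]
        congr 1
        field_simp
    _ ≤ (|(Algebra.norm ℚ (wedge x y) : ℝ)| / (archNorm x * archNorm y)) ^
          ((Module.finrank ℚ k : ℝ)⁻¹) :=
      Real.rpow_le_rpow (by positivity)
        (div_le_div_of_nonneg_right (idealNorm_mul_idealNorm_le_abs_norm_wedge h) (by positivity))
        (by positivity)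
    _ ≤ ∑ v, localDist v x y := by
      rw [← hprod]
      exact rpow_prod_pow_mult_le_sum _ fun v => localDist_nonneg v x y

theorem inv_projHeight_le_projDist_mul_projHeight {P Q : Projectivization k (Fin 2 → k)}
    (h : Q ≠ P) : (projHeight k P)⁻¹ ≤ projDist k P Q * projHeight k Q := by
  have hHQ := projHeight_pos Q
  have hprodHeight : (projHeight k P * projHeight k Q)⁻¹ ≤ projDist k P Q := by
    rw [projDist_eq_sum]
    exact inv_vecHeight_mul_vecHeight_le_sum_localDist P.rep_nonzero Q.rep_nonzero
      (wedge_rep_ne_zero h)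
  calc (projHeight k P)⁻¹ = (projHeight k P * projHeight k Q)⁻¹ * projHeight k Q := by
        field_simp
    _ ≤ projDist k P Q * projHeight k Q := mul_le_mul_of_nonneg_right hprodHeight hHQ.le

end Liouville

section Dirichlet

variable {K : Type*} [Field K] {ι : Type*} [DecidableEq ι] (v : InfinitePlace K)

lemma supNorm_natCast_smul_add_single_le [Finite ι] (n : ℕ) (x : ι → K) (i j : ι) :
    supNorm v ((n : K) • x + (Pi.single i (x j) : ι → K)) ≤ (n + 1) * supNorm v x := by
  have hx := supNorm_nonneg v x
  refine Real.iSup_le (fun l => ?_) (by positivity)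
  have hsingle : v ((Pi.single i (x j) : ι → K) l) ≤ supNorm v x := by
    rw [Pi.single_apply]
    split_ifs
    exacts [le_supNorm v x j, by simpa using hx]
  calc v (((n : K) • x + (Pi.single i (x j) : ι → K)) l)
      ≤ v ((n : K) * x l) + v ((Pi.single i (x j) : ι → K) l) := v.1.add_le _ _
    _ ≤ n * supNorm v x + supNorm v x := by
        rw [map_mul, InfinitePlace.map_natCast]
        gcongr
        exact le_supNorm v x l
    _ = (n + 1) * supNorm v x := by ring

lemma natCast_mul_le_supNorm_smul_add_single [Finite ι] (n : ℕ) (x : ι → K) {i j : ι}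
    (hij : i ≠ j) : n * v (x j) ≤ supNorm v ((n : K) • x + (Pi.single i (x j) : ι → K)) := by
  simpa [Pi.single_apply, hij.symm] using le_supNorm v ((n : K) • x + (Pi.single i (x j) : ι → K)) j

lemma localDist_natCast_smul_add_single_rev_le {x : Fin 2 → K} {j : Fin 2} (hj : x j ≠ 0)
    {n : ℕ} (hn : 0 < n) :
    localDist v x ((n : K) • x + Pi.single j.rev (x j)) ≤ (n : ℝ)⁻¹ := by
  set z := (n : K) • x + Pi.single j.rev (x j)
  have hz : z ≠ 0 := ne_zero_of_wedge_ne_zero (wedge_smul_add_single_rev_ne_zero hj _)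
  have hwedge : v (wedge x z) = v (x j) * v (x j) := by
    simp [z, wedge_smul_add_single_rev, InfinitePlace.coe_apply]
  have hxz : 0 < supNorm v x * supNorm v z :=
    mul_pos (supNorm_pos v (Function.ne_iff.mpr ⟨j, hj⟩)) (supNorm_pos v hz)
  have hzj : n * v (x j) ≤ supNorm v z :=
    natCast_mul_le_supNorm_smul_add_single v n x (by fin_cases j <;> decide)
  rw [localDist, hwedge, div_le_iff₀ hxz, inv_mul_eq_div, le_div_iff₀ (by positivity)]
  calc v (x j) * v (x j) * n = v (x j) * (n * v (x j)) := by ring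
    _ ≤ supNorm v x * supNorm v z :=
      mul_le_mul (le_supNorm v x j) hzj (by positivity) (supNorm_nonneg v x)

end Dirichlet

section DirichletSequence

open FractionalIdeal

variable {k}

theorem exists_seq_projDist_mul_projHeight_le (P : Projectivization k (Fin 2 → k)) :
    ∃ Q : ℕ → Projectivization k (Fin 2 → k), (∀ i, Q i ≠ P) ∧
      Tendsto (fun i => projDist k P (Q i)) atTop (𝓝 0) ∧
      ∃ C : ℝ, ∀ i, projDist k P (Q i) * projHeight k (Q i) ≤ C := by
  obtain ⟨j, hj⟩ := Function.ne_iff.mp P.rep_nonzero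
  set r : ℝ := (Fintype.card (InfinitePlace k) : ℝ)
  set z : ℕ → Fin 2 → k := fun n => (n : k) • P.rep + Pi.single j.rev (P.rep j)
  have hw : ∀ n, wedge P.rep (z n) ≠ 0 := fun n => wedge_smul_add_single_rev_ne_zero hj _
  have hz : ∀ n, z n ≠ 0 := fun n => ne_zero_of_wedge_ne_zero (hw n)
  have hdist : ∀ n, 0 < n → projDist k P (Projectivization.mk k (z n) (hz n)) ≤ r / n := by
    intro n hn
    rw [projDist_mk, div_eq_mul_inv, ← nsmul_eq_mul, ← Finset.card_univ]
    exact Finset.sum_le_card_nsmul _ _ _ fun v _ => localDist_natCast_smul_add_single_rev_le v hj hn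
  have hheight :
      ∀ n, projHeight k (Projectivization.mk k (z n) (hz n)) ≤ (n + 1) * projHeight k P :=
    fun n => (projHeight_mk (hz n)).trans_le (vecHeight_le_mul_vecHeight (hz n) (by positivity)
      (fun v => supNorm_natCast_smul_add_single_le v n _ _ _)
      (spanFinset_natCast_smul_add_single_le n _ _ _))
  refine ⟨fun i => Projectivization.mk k (z (i + 1)) (hz _),
    fun i => mk_ne_of_wedge_ne_zero P _ (hw _), ?_, 2 * r * projHeight k P, fun i => ?_⟩
  · exact tendsto_of_tendsto_of_tendsto_of_le_of_le tendsto_const_nhds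
      ((tendsto_add_atTop_iff_nat 1).2 (tendsto_const_div_atTop_nhds_zero_nat r))
      (fun i => projDist_nonneg _ _) (fun i => hdist _ i.succ_pos)
  · have hHP := projHeight_pos P
    have hr : 0 ≤ r := Nat.cast_nonneg _
    have hm : (1 : ℝ) ≤ (i + 1 : ℕ) := by exact_mod_cast i.succ_pos
    calc _ ≤ r / (i + 1 : ℕ) * (((i + 1 : ℕ) + 1 : ℝ) * projHeight k P) :=
          mul_le_mul (hdist _ i.succ_pos) (hheight _) (projHeight_pos _).le (by positivity)
      _ ≤ 2 * r * projHeight k P := by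
          rw [div_mul_eq_mul_div, div_le_iff₀ (by positivity)]
          nlinarith [mul_nonneg hr hHP.le]

end DirichletSequence

section ApproximationConstant

variable {X : Type*} {d : X → X → ℝ} {h : X → ℝ} {P : X} {c : ℝ}

lemma one_le_of_approxSeq (hc : 0 < c) (hd : ∀ Q, Q ≠ P → 0 < d P Q)
    (hliouville : ∀ Q, Q ≠ P → c ≤ d P Q * h Q) {Q : ℕ → X} (hQ : ApproxSeq d P Q) {a C : ℝ}
    (hC : ∀ i, d P (Q i) ^ a * h (Q i) ≤ C) : 1 ≤ a := by
  by_contra! ha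
  have hpos : ∀ i, 0 < d P (Q i) := fun i => hd _ (hQ.1 i)
  have hto : Tendsto (fun i => d P (Q i)) atTop (𝓝[>] 0) :=
    tendsto_nhdsWithin_iff.2 ⟨hQ.2, Eventually.of_forall hpos⟩
  obtain ⟨i, hi⟩ :=
    (((tendsto_rpow_neg_nhdsGT_zero (sub_neg.2 ha)).comp hto).eventually_gt_atTop (C / c)).exists
  rw [Function.comp_apply, div_lt_iff₀' hc] at hi
  have hbound : c * d P (Q i) ^ (a - 1) ≤ d P (Q i) ^ a * h (Q i) := calc
    c * d P (Q i) ^ (a - 1) ≤ d P (Q i) * h (Q i) * d P (Q i) ^ (a - 1) :=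
      mul_le_mul_of_nonneg_right (hliouville _ (hQ.1 i)) (Real.rpow_nonneg (hpos i).le _)
    _ = d P (Q i) ^ a * h (Q i) := by
      have := (hpos i).ne'
      rw [Real.rpow_sub_one this]
      field_simp
  linarith [hC i]

theorem isPointApproxConst_one (hc : 0 < c) (hd : ∀ Q, Q ≠ P → 0 < d P Q)
    (hliouville : ∀ Q, Q ≠ P → c ≤ d P Q * h Q) {S : Set X} {Q : ℕ → X} (hQS : ∀ i, Q i ∈ S)
    (hQ : ApproxSeq d P Q) {C : ℝ} (hC : ∀ i, d P (Q i) * h (Q i) ≤ C) :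
    IsPointApproxConst d h S P 1 := by
  refine ⟨⟨Q, hQS, hQ, ⟨zero_le_one, C, by simpa using hC⟩, ?_⟩, ?_⟩
  · rintro a ⟨-, C', hC'⟩
    exact one_le_of_approxSeq hc hd hliouville hQ hC'
  · rintro a ⟨Q', -, hQ', ⟨-, C', hC'⟩, -⟩
    exact one_le_of_approxSeq hc hd hliouville hQ' hC'

end ApproximationConstant

/-- There is a sequence `Qᵢ → P` in `ℙ¹(k) ∖ {P}` with
`dist(P,Qᵢ) · H(Qᵢ)` bounded; consequently the approximation constant of `P`
on `ℙ¹(k)` exists and equals `1`. -/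
theorem statement2 (P : Projectivization k (Fin 2 → k)) :
    (∃ Q : ℕ → Projectivization k (Fin 2 → k),
      (∀ i, Q i ≠ P) ∧
      Tendsto (fun i => projDist k P (Q i)) atTop (𝓝 0) ∧
      ∃ C : ℝ, ∀ i, projDist k P (Q i) * projHeight k (Q i) ≤ C) ∧
    IsPointApproxConst (projDist k) (projHeight k) Set.univ P 1 := by
  obtain ⟨Q, hQP, hQ0, C, hC⟩ := exists_seq_projDist_mul_projHeight_le P
  exact ⟨⟨Q, hQP, hQ0, C, hC⟩,
    isPointApproxConst_one (inv_pos.2 (projHeight_pos P)) (fun _ h => projDist_pos h)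
      (fun _ h => inv_projHeight_le_projDist_mul_projHeight h) (fun _ => Set.mem_univ _)
      ⟨hQP, hQ0⟩ hC⟩
end
end

section
/- Let P = [0 : 0 : 1] ∈ ℙ²(ℚ). There exists a sequence (Q_n) in ℙ²(ℚ) ∖ {P} with dist(P, Q_n) → 0 such that for every ε > 0 one has limsup_n dist(P, Q_n)^{1+ε} · H(Q_n) < ∞, while limsup_n dist(P, Q_n) · H(Q_n) = ∞. In particular, the set of exponents α ≥ 0 with limsup_n dist(P, Q_n)^α · H(Q_n) < ∞ is nonempty but has no least element, so the sequence (Q_n) has no approximation constant. -/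
open NumberField Filter Topology

noncomputable section

variable (k : Type*) [Field k] [NumberField k]

/-- The point `[0 : 0 : 1]` of `ℙ²(ℚ)`. -/
def basePoint : Projectivization ℚ (Fin 3 → ℚ) :=
  Projectivization.mk ℚ ![0, 0, 1] (by
    intro h
    simpa using congrFun h 2)

/-!
Take `Qₙ = [n + 1 : 0 : b]` with `b = (n + 1) ^ (n + 1) + 1`. Its coordinates are coprime, so
`H(Qₙ) = b`, and `dist(P, Qₙ) = (n + 1) / b`. Hence `dist · H = n + 1` is unbounded, while
`b ≥ (n + 1) ^ (n + 1)` gives `dist ^ (1 + ε) · H ≤ (n + 1) ^ (1 - nε)`, which is at most `1`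
once `nε ≥ 1`. The admissible exponents thus form the open interval `(1, ∞)`, which has no
least element.
-/

open scoped nonZeroDivisors

lemma ciSup_eq_of_forall_le_of_apply_eq {ι α : Type*} [ConditionallyCompleteLattice α]
    {f : ι → α} {b : α} (i : ι) (hle : ∀ j, f j ≤ b) (hi : f i = b) : ⨆ j, f j = b :=
  haveI : Nonempty ι := ⟨i⟩
  ciSup_eq_of_forall_le_of_forall_lt_exists_gt hle fun _ h => ⟨i, h.trans_eq hi.symm⟩

lemma not_isLeast_Ioi {α : Type*} [LinearOrder α] [DenselyOrdered α] (a b : α) :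
    ¬ IsLeast (Set.Ioi a) b := fun h =>
  (Set.mem_Ioi.mp h.1).ne' (h.isGLB.unique isGLB_Ioi)

lemma NumberField.InfinitePlace.iSup_apply_mul {K ι : Type*} [Field K] (v : InfinitePlace K)
    (c : K) (x : ι → K) :
    ⨆ j, v (c * x j) = v c * ⨆ j, v (x j) := by
  simp_rw [map_mul]
  exact (Real.mul_iSup_of_nonneg (apply_nonneg v c) _).symm

lemma projDist_mk_s4 {m : ℕ} {x y : Fin m → k} (hx : x ≠ 0) (hy : y ≠ 0) :
    projDist k (Projectivization.mk k x hx) (Projectivization.mk k y hy) =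
      ∑ v : InfinitePlace k, (⨆ p : Fin m × Fin m, v (x p.1 * y p.2 - x p.2 * y p.1)) /
        ((⨆ j, v (x j)) * (⨆ j, v (y j))) := by
  obtain ⟨a, ha⟩ := Projectivization.exists_smul_eq_mk_rep k x hx
  obtain ⟨b, hb⟩ := Projectivization.exists_smul_eq_mk_rep k y hy
  rw [projDist]
  refine Finset.sum_congr rfl fun v _ => ?_
  have hab : ∀ p : Fin m × Fin m, (a • x) p.1 * (b • y) p.2 - (a • x) p.2 * (b • y) p.1 =
      (a * b : k) * (x p.1 * y p.2 - x p.2 * y p.1) := fun p => by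
    simp only [Pi.smul_apply, Units.smul_def, smul_eq_mul]; ring
  have hv : v (a * b : k) ≠ 0 := (InfinitePlace.pos_iff.mpr (by simp)).ne'
  simp only [← ha, ← hb, hab]
  simp only [Pi.smul_apply, Units.smul_def, smul_eq_mul, InfinitePlace.iSup_apply_mul]
  rw [mul_mul_mul_comm, ← map_mul]
  exact mul_div_mul_left _ _ hv

lemma projDist_rat_mk {m : ℕ} {x y : Fin m → ℚ} (hx : x ≠ 0) (hy : y ≠ 0) :
    projDist ℚ (Projectivization.mk ℚ x hx) (Projectivization.mk ℚ y hy) =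
      (⨆ p : Fin m × Fin m, |((x p.1 * y p.2 - x p.2 * y p.1 : ℚ) : ℝ)|) /
        ((⨆ j, |(x j : ℝ)|) * (⨆ j, |(y j : ℝ)|)) := by
  simp only [projDist_mk_s4, Fintype.sum_unique, Rat.infinitePlace_apply, Rat.cast_abs]

lemma spanFinset_rat_smul_intCast {ι : Type*} [Fintype ι] (c : ℚ) {x : ι → ℤ}
    (hx : ∃ u : ι → ℤ, ∑ j, u j * x j = 1) :
    FractionalIdeal.spanFinset (𝓞 ℚ) Finset.univ (c • fun j => (x j : ℚ)) =
      FractionalIdeal.spanSingleton (𝓞 ℚ)⁰ c := by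
  rw [← FractionalIdeal.coeToSubmodule_inj, FractionalIdeal.spanFinset_coe,
    FractionalIdeal.coe_spanSingleton]
  apply le_antisymm
  · rw [Submodule.span_le]
    rintro _ ⟨j, -, rfl⟩
    exact Submodule.mem_span_singleton.mpr ⟨(x j : 𝓞 ℚ), by simp [Algebra.smul_def, mul_comm]⟩
  · obtain ⟨u, hu⟩ := hx
    have hc : ∑ j, (u j : 𝓞 ℚ) • (c • fun j => (x j : ℚ)) j = c := by
      have hu' : ∑ j, (u j : ℚ) * x j = 1 := by exact_mod_cast hu
      simp only [Pi.smul_apply, smul_eq_mul, Algebra.smul_def, map_intCast]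
      calc ∑ j, (u j : ℚ) * (c * x j) = c * ∑ j, (u j : ℚ) * x j := by
            rw [Finset.mul_sum]; exact Finset.sum_congr rfl fun j _ => by ring
        _ = c := by rw [hu', mul_one]
    have hmem : ∑ j, (u j : 𝓞 ℚ) • (c • fun j => (x j : ℚ)) j ∈
        Submodule.span (𝓞 ℚ) ((c • fun j => (x j : ℚ)) '' ↑(Finset.univ : Finset ι)) :=
      Submodule.sum_mem _ fun j _ => Submodule.smul_mem _ _ (Submodule.subset_span
        ⟨j, by simp, rfl⟩)
    rwa [hc, ← Submodule.span_singleton_le_iff_mem] at hmem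

lemma vecHeight_rat {ι : Type*} [Fintype ι] (x : ι → ℚ) :
    vecHeight ℚ x = (⨆ j, |(x j : ℝ)|) /
      ((FractionalIdeal.absNorm (FractionalIdeal.spanFinset (𝓞 ℚ) Finset.univ x) : ℚ) : ℝ) := by
  have hmult : (default : InfinitePlace ℚ).mult = 1 := Rat.isReal_infinitePlace.mult_eq_one
  simp only [vecHeight, Fintype.prod_unique, hmult, pow_one, Rat.infinitePlace_apply,
    Rat.cast_abs, Module.finrank_self, Nat.cast_one, inv_one, Real.rpow_one]

lemma vecHeight_rat_smul_intCast {ι : Type*} [Fintype ι] {c : ℚ} (hc : c ≠ 0) {x : ι → ℤ}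
    (hx : ∃ u : ι → ℤ, ∑ j, u j * x j = 1) :
    vecHeight ℚ (c • fun j => (x j : ℚ)) = ⨆ j, |(x j : ℝ)| := by
  rw [vecHeight_rat, spanFinset_rat_smul_intCast c hx, FractionalIdeal.absNorm_span_singleton,
    Algebra.norm_self]
  simp only [Pi.smul_apply, smul_eq_mul, Rat.cast_mul, Rat.cast_intCast, abs_mul,
    ← Real.mul_iSup_of_nonneg (abs_nonneg _), MonoidHom.id_apply, Rat.cast_abs]
  exact mul_div_cancel_left₀ _ (by simpa using hc)

lemma projHeight_mk_intCast {m : ℕ} {x : Fin m → ℤ} (hx : ∃ u : Fin m → ℤ, ∑ j, u j * x j = 1)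
    (h : (fun j => (x j : ℚ)) ≠ 0) :
    projHeight ℚ (Projectivization.mk ℚ (fun j => (x j : ℚ)) h) = ⨆ j, |(x j : ℝ)| := by
  obtain ⟨a, ha⟩ := Projectivization.exists_smul_eq_mk_rep ℚ _ h
  rw [projHeight, ← ha, Units.smul_def]
  exact vecHeight_rat_smul_intCast a.ne_zero hx

lemma projDist_self {m : ℕ} (P : Projectivization k (Fin m → k)) : projDist k P P = 0 := by
  simp [projDist, mul_comm]

lemma projDist_basePoint_mk {a b : ℚ} (hab : |a| ≤ |b|) (h : ![a, 0, b] ≠ 0) :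
    projDist ℚ basePoint (Projectivization.mk ℚ ![a, 0, b] h) = |(a : ℝ)| / |(b : ℝ)| := by
  have hab' : |(a : ℝ)| ≤ |(b : ℝ)| := by exact_mod_cast hab
  have hcross : ⨆ p : Fin 3 × Fin 3, |((![0, 0, 1] p.1 * ![a, 0, b] p.2 -
      ![0, 0, 1] p.2 * ![a, 0, b] p.1 : ℚ) : ℝ)| = |(a : ℝ)| := by
    refine ciSup_eq_of_forall_le_of_apply_eq (2, 0) (fun p => ?_) (by simp)
    rcases p with ⟨i, j⟩
    fin_cases i <;> fin_cases j <;> simp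
  have hbase : ⨆ j, |((![0, 0, 1] j : ℚ) : ℝ)| = 1 :=
    ciSup_eq_of_forall_le_of_apply_eq 2 (fun j => by fin_cases j <;> simp) (by simp)
  have hpoint : ⨆ j, |((![a, 0, b] j : ℚ) : ℝ)| = |(b : ℝ)| :=
    ciSup_eq_of_forall_le_of_apply_eq 2 (fun j => by fin_cases j <;> simp [hab']) (by simp)
  rw [basePoint, projDist_rat_mk, hcross, hbase, hpoint, one_mul]

def approxHeight (n : ℕ) : ℝ := (n + 1) ^ (n + 1) + 1

def approxDist (n : ℕ) : ℝ := (n + 1) / approxHeight n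

lemma approxHeight_pos (n : ℕ) : 0 < approxHeight n := by
  unfold approxHeight; positivity

lemma approxDist_pos (n : ℕ) : 0 < approxDist n :=
  div_pos (by positivity) (approxHeight_pos n)

lemma approxDist_mul_approxHeight (n : ℕ) : approxDist n * approxHeight n = n + 1 :=
  div_mul_cancel₀ _ (approxHeight_pos n).ne'

lemma add_one_le_approxHeight (n : ℕ) : (n + 1 : ℝ) ≤ approxHeight n := by
  have h : (n + 1 : ℝ) ≤ (n + 1) ^ (n + 1) :=
    le_self_pow₀ (by linarith [n.cast_nonneg (α := ℝ)]) n.succ_ne_zero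
  unfold approxHeight
  linarith

lemma approxDist_le_one (n : ℕ) : approxDist n ≤ 1 :=
  (div_le_one (approxHeight_pos n)).mpr (add_one_le_approxHeight n)

lemma approxDist_le_inv_pow (n : ℕ) : approxDist n ≤ ((n + 1 : ℝ) ^ n)⁻¹ := by
  rw [approxDist, approxHeight, div_le_iff₀ (by positivity), ← div_eq_inv_mul,
    le_div_iff₀ (by positivity), ← pow_succ']
  linarith

lemma approxDist_le_inv (n : ℕ) : approxDist n ≤ (n + 1 : ℝ)⁻¹ := by
  rcases n with _ | n
  · simpa using approxDist_le_one 0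
  · refine (approxDist_le_inv_pow _).trans (inv_anti₀ (by positivity) ?_)
    exact le_self_pow₀ (by linarith [n.cast_nonneg (α := ℝ)]) n.succ_ne_zero

lemma tendsto_approxDist : Tendsto approxDist atTop (𝓝 0) :=
  squeeze_zero (fun n => (approxDist_pos n).le) approxDist_le_inv
    (by simpa only [one_div] using tendsto_one_div_add_atTop_nhds_zero_nat (𝕜 := ℝ))

def admissibleExponents (d h : ℕ → ℝ) : Set ℝ :=
  {a | 0 ≤ a ∧ ∃ C : ℝ, ∀ i, d i ^ a * h i ≤ C}

lemma approxDist_rpow_mul_approxHeight_le {ε : ℝ} (hε : 0 ≤ ε) (n : ℕ) :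
    approxDist n ^ (1 + ε) * approxHeight n ≤ (n + 1 : ℝ) ^ (1 - n * ε) := by
  have ht : (0 : ℝ) < n + 1 := by positivity
  calc approxDist n ^ (1 + ε) * approxHeight n
        = approxDist n ^ ε * (approxDist n * approxHeight n) := by
          rw [Real.rpow_add (approxDist_pos n), Real.rpow_one]; ring
    _ ≤ (((n + 1 : ℝ) ^ n)⁻¹) ^ ε * (n + 1) := by
          rw [approxDist_mul_approxHeight]
          gcongr
          exacts [(approxDist_pos n).le, approxDist_le_inv_pow n]
    _ = (n + 1 : ℝ) ^ (-(n * ε) + 1) := by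
          rw [Real.rpow_add ht, Real.rpow_one, Real.rpow_neg ht.le, Real.rpow_mul ht.le,
            Real.rpow_natCast, Real.inv_rpow (by positivity)]
    _ = (n + 1 : ℝ) ^ (1 - n * ε) := by ring_nf

lemma exists_forall_approxDist_rpow_mul_approxHeight_le {ε : ℝ} (hε : 0 < ε) :
    ∃ C : ℝ, ∀ n, approxDist n ^ (1 + ε) * approxHeight n ≤ C := by
  have hev : ∀ᶠ n in atTop, approxDist n ^ (1 + ε) * approxHeight n ≤ 1 := by
    filter_upwards [eventually_ge_atTop ⌈ε⁻¹⌉₊] with n hn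
    have hnε : 1 ≤ n * ε := (inv_le_iff_one_le_mul₀ hε).mp (Nat.ceil_le.mp hn)
    refine (approxDist_rpow_mul_approxHeight_le hε.le n).trans ?_
    exact Real.rpow_le_one_of_one_le_of_nonpos (by linarith [n.cast_nonneg (α := ℝ)])
      (by linarith)
  rw [← Nat.cofinite_eq_atTop] at hev
  obtain ⟨C, hC⟩ := (isBoundedUnder_of_eventually_le hev).bddAbove_range_of_cofinite
  exact ⟨C, fun n => hC (Set.mem_range_self n)⟩

lemma add_one_le_approxDist_rpow_mul_approxHeight {s : ℝ} (hs : s ≤ 1) (n : ℕ) :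
    (n + 1 : ℝ) ≤ approxDist n ^ s * approxHeight n := by
  rw [← approxDist_mul_approxHeight]
  nth_rw 1 [← Real.rpow_one (approxDist n)]
  exact mul_le_mul_of_nonneg_right
    (Real.rpow_le_rpow_of_exponent_ge (approxDist_pos n) (approxDist_le_one n) hs)
    (approxHeight_pos n).le

lemma admissibleExponents_approx :
    admissibleExponents approxDist approxHeight = Set.Ioi 1 := by
  ext s
  constructor
  · rintro ⟨-, C, hC⟩
    by_contra hs
    obtain ⟨n, hn⟩ := exists_nat_gt C
    linarith [hC n, add_one_le_approxDist_rpow_mul_approxHeight (not_lt.mp hs) n]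
  · intro hs
    refine ⟨by linarith [Set.mem_Ioi.mp hs], ?_⟩
    simpa using exists_forall_approxDist_rpow_mul_approxHeight_le (sub_pos.mpr hs)

def approxVec (n : ℕ) : Fin 3 → ℤ := ![n + 1, 0, (n + 1) ^ (n + 1) + 1]

lemma intCast_approxVec (n : ℕ) :
    (fun j => (approxVec n j : ℚ)) = ![(n + 1 : ℚ), 0, (n + 1) ^ (n + 1) + 1] := by
  ext j; fin_cases j <;> simp [approxVec]

lemma intCast_approxVec_ne_zero (n : ℕ) : (fun j => (approxVec n j : ℚ)) ≠ 0 := by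
  rw [intCast_approxVec]
  intro h
  have h0 : (n + 1 : ℚ) = 0 := congrFun h 0
  linarith [n.cast_nonneg (α := ℚ)]

lemma approxVec_bezout (n : ℕ) :
    ∑ j, ![-(n + 1 : ℤ) ^ n, 0, 1] j * approxVec n j = 1 := by
  simp only [approxVec, Fin.sum_univ_three, Matrix.cons_val_zero, Matrix.cons_val_one,
    Matrix.cons_val, mul_zero, add_zero]
  ring

def approxPoint (n : ℕ) : Projectivization ℚ (Fin 3 → ℚ) :=
  Projectivization.mk ℚ (fun j => (approxVec n j : ℚ)) (intCast_approxVec_ne_zero n)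

lemma projHeight_approxPoint (n : ℕ) : projHeight ℚ (approxPoint n) = approxHeight n := by
  rw [approxPoint, projHeight_mk_intCast ⟨_, approxVec_bezout n⟩]
  have hle := add_one_le_approxHeight n
  have hpos := approxHeight_pos n
  unfold approxHeight at hle hpos ⊢
  refine ciSup_eq_of_forall_le_of_apply_eq 2 (fun j => ?_) ?_
  · fin_cases j <;> simp [approxVec, abs_of_pos hpos, abs_of_pos (by positivity : (0 : ℝ) < n + 1),
      hle, hpos.le]
  · simp [approxVec, abs_of_pos hpos]

lemma projDist_basePoint_approxPoint (n : ℕ) :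
    projDist ℚ basePoint (approxPoint n) = approxDist n := by
  have hab : |(n + 1 : ℚ)| ≤ |(n + 1 : ℚ) ^ (n + 1) + 1| := by
    rw [abs_of_pos (by positivity), abs_of_pos (by positivity)]
    have h := add_one_le_approxHeight n
    unfold approxHeight at h
    exact_mod_cast h
  rw [approxPoint]
  simp only [intCast_approxVec]
  rw [projDist_basePoint_mk hab, approxDist, approxHeight]
  push_cast
  rw [abs_of_pos (by positivity), abs_of_pos (by positivity)]

lemma approxPoint_ne_basePoint (n : ℕ) : approxPoint n ≠ basePoint := fun h =>
  (approxDist_pos n).ne' (by rw [← projDist_basePoint_approxPoint, h, projDist_self])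

/-- There is a sequence `Qₙ → P = [0:0:1]` in `ℙ²(ℚ) ∖ {P}` such that
`dist(P,Qₙ)^(1+ε) · H(Qₙ)` is bounded for every `ε > 0` while `dist(P,Qₙ) · H(Qₙ)` is
unbounded; hence the set of admissible exponents is nonempty but has no least element,
so the sequence has no approximation constant. -/
theorem statement4 :
    ∃ Q : ℕ → Projectivization ℚ (Fin 3 → ℚ),
      (∀ i, Q i ≠ basePoint) ∧
      Tendsto (fun i => projDist ℚ basePoint (Q i)) atTop (𝓝 0) ∧
      (∀ ε : ℝ, 0 < ε →
        ∃ C : ℝ, ∀ i, projDist ℚ basePoint (Q i) ^ (1 + ε) * projHeight ℚ (Q i) ≤ C) ∧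
      (¬ ∃ C : ℝ, ∀ i, projDist ℚ basePoint (Q i) * projHeight ℚ (Q i) ≤ C) ∧
      {a : ℝ | 0 ≤ a ∧
        ∃ C : ℝ, ∀ i, projDist ℚ basePoint (Q i) ^ a * projHeight ℚ (Q i) ≤ C}.Nonempty ∧
      ¬ ∃ α : ℝ, IsApproxConst (projDist ℚ) (projHeight ℚ) basePoint Q α := by
  have hS : admissibleExponents (fun i => projDist ℚ basePoint (approxPoint i))
      (fun i => projHeight ℚ (approxPoint i)) = Set.Ioi 1 := by
    simpa only [projDist_basePoint_approxPoint, projHeight_approxPoint]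
      using admissibleExponents_approx
  refine ⟨approxPoint, approxPoint_ne_basePoint, ?_, fun ε hε => ?_, ?_, ?_, ?_⟩
  · simpa only [projDist_basePoint_approxPoint] using tendsto_approxDist
  · exact ((Set.ext_iff.mp hS (1 + ε)).mpr (by simpa using hε)).2
  · rintro ⟨C, hC⟩
    exact Set.self_notMem_Ioi ((Set.ext_iff.mp hS 1).mp ⟨zero_le_one, C, by simpa using hC⟩)
  · exact ⟨2, (Set.ext_iff.mp hS 2).mpr (by norm_num)⟩
  · rintro ⟨α, hα⟩
    exact not_isLeast_Ioi 1 α (hS ▸ hα)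

end
end

section
/- Let n ≥ 2 and k ≥ 1 be integers with k < n. In ℝ^{k+2} with coordinates (a, b, f₁, …, f_k), let C = {(a, b, f₁, …, f_k) : b − n·a ≥ 0, and a + f_i ≥ 0 and f_i ≤ 0 for all 1 ≤ i ≤ k}. For each α = (α₁, …, α_k) ∈ {0,1}^k set D_α = (1, n, −α₁, …, −α_k), and set F = (0, 1, 0, …, 0). Then C = cone({F} ∪ {D_α : α ∈ {0,1}^k}). -/
/-!
Every generator satisfies the defining inequalities, and these are preserved by nonnegative
combinations. Conversely, for `(a, b, f)` in the cone, `a ≥ 0` and `t = -f / a` lies in the unit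
cube `[0,1]^k`, which is the convex hull of `{0,1}^k`; hence `(1, n, -t)` is a convex combination
of the `D_α`, and `(a, b, f) = (b - n a) • F + a • (1, n, -t)`.
-/

/-- The convex cone generated by a set `s`: all finite nonnegative real linear
combinations of elements of `s`. -/
def coneHull {E : Type*} [AddCommMonoid E] [Module ℝ E] (s : Set E) : Set E :=
  {x | ∃ (n : ℕ) (c : Fin n → ℝ) (g : Fin n → E),
    (∀ i, 0 ≤ c i) ∧ (∀ i, g i ∈ s) ∧ x = ∑ i, c i • g i}

open Set

theorem coneHull_eq_hull {E : Type*} [AddCommMonoid E] [Module ℝ E] (s : Set E) :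
    coneHull s = PointedCone.hull ℝ s := by
  ext x
  simp only [coneHull, mem_ofPred_eq, SetLike.mem_coe, Submodule.mem_span_set']
  constructor
  · rintro ⟨m, c, g, hc, hg, rfl⟩
    exact ⟨m, fun i => ⟨c i, hc i⟩, fun i => ⟨g i, hg i⟩, rfl⟩
  · rintro ⟨m, c, g, rfl⟩
    exact ⟨m, fun i => c i, fun i => g i, fun i => (c i).2, fun i => (g i).2, rfl⟩

theorem convexHull_setOf_forall_eq_zero_or_eq_one (ι : Type*) [Finite ι] :
    convexHull ℝ {t : ι → ℝ | ∀ i, t i = 0 ∨ t i = 1} = univ.pi fun _ => Icc 0 1 := by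
  have hvert : {t : ι → ℝ | ∀ i, t i = 0 ∨ t i = 1} = univ.pi fun _ => {0, 1} := by
    ext; simp
  rw [hvert, convexHull_pi, convexHull_pair, segment_eq_Icc zero_le_one]

/-- Coordinates `(a, b, f)` stand for the divisor `a S + b F + ∑ fᵢ Eᵢ`; the three conditions are
nonnegative intersection with `S`, the `Fᵢ` and the `Eᵢ`. -/
def nefCone (n : ℝ) (ι : Type*) : PointedCone ℝ (ℝ × ℝ × (ι → ℝ)) where
  carrier := {p | 0 ≤ p.2.1 - n * p.1 ∧ ∀ i, 0 ≤ p.1 + p.2.2 i ∧ p.2.2 i ≤ 0}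
  zero_mem' := by simp
  add_mem' := by
    rintro p q ⟨hp, hpi⟩ ⟨hq, hqi⟩
    refine ⟨by simp only [Prod.snd_add, Prod.fst_add]; linarith, fun i => ?_⟩
    simp only [Prod.snd_add, Prod.fst_add, Pi.add_apply]
    constructor <;> linarith [hpi i, hqi i]
  smul_mem' := by
    rintro ⟨c, hc⟩ p ⟨hp, hpi⟩
    simp only [Nonneg.mk_smul, Prod.smul_fst, Prod.smul_snd, Pi.smul_apply, smul_eq_mul,
      mem_ofPred_eq]
    exact ⟨by linarith [mul_nonneg hc hp], fun i =>
      ⟨by linarith [mul_nonneg hc (hpi i).1], mul_nonpos_of_nonneg_of_nonpos hc (hpi i).2⟩⟩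

def nefGenerators (n : ℝ) (ι : Type*) : Set (ℝ × ℝ × (ι → ℝ)) :=
  {(0, 1, 0)} ∪ {p | ∃ α : ι → ℝ, (∀ i, α i = 0 ∨ α i = 1) ∧ p = (1, n, fun i => -α i)}

section

variable {n : ℝ} {ι : Type*}

theorem hull_nefGenerators_le : PointedCone.hull ℝ (nefGenerators n ι) ≤ nefCone n ι := by
  refine Submodule.span_le.mpr ?_
  rintro _ (rfl | ⟨α, hα, rfl⟩)
  · exact ⟨by simp, fun i => by simp⟩
  · refine ⟨by simp, fun i => ?_⟩
    rcases hα i with h | h <;> simp [h]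

theorem mem_hull_nefGenerators_of_mem_unitCube [Finite ι] {t : ι → ℝ}
    (ht : t ∈ univ.pi fun _ => Icc 0 1) :
    ((1 : ℝ), n, -t) ∈ PointedCone.hull ℝ (nefGenerators n ι) := by
  let φ : (ι → ℝ) →ᵃ[ℝ] ℝ × ℝ × (ι → ℝ) :=
    (-(LinearMap.inr ℝ ℝ _ ∘ₗ LinearMap.inr ℝ ℝ (ι → ℝ))).toAffineMap +
      AffineMap.const ℝ _ (1, n, 0)
  have hvert : {t : ι → ℝ | ∀ i, t i = 0 ∨ t i = 1} ⊆
      φ ⁻¹' PointedCone.hull ℝ (nefGenerators n ι) :=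
    fun α hα => PointedCone.subset_hull (Or.inr ⟨α, hα, by simp [φ]; rfl⟩)
  rw [← convexHull_setOf_forall_eq_zero_or_eq_one] at ht
  simpa [φ] using convexHull_min hvert ((PointedCone.convex _).affine_preimage φ) ht

theorem nefCone_le_hull [Finite ι] [Nonempty ι] :
    nefCone n ι ≤ PointedCone.hull ℝ (nefGenerators n ι) := by
  rintro ⟨a, b, f⟩ ⟨hb, hf⟩
  have ha : 0 ≤ a := by linarith [hf (Classical.arbitrary ι)]
  have ht : (fun i => -f i / a) ∈ univ.pi fun _ => Icc 0 1 := fun i _ =>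
    ⟨div_nonneg (by linarith [(hf i).2]) ha, div_le_one_of_le₀ (by linarith [(hf i).1]) ha⟩
  have hsplit : (a, b, f) = (b - n * a) • ((0 : ℝ), (1 : ℝ), (0 : ι → ℝ)) +
      a • ((1 : ℝ), n, -fun i => -f i / a) := by
    ext i
    · simp
    · simp only [Prod.smul_mk, smul_eq_mul, Prod.mk_add_mk]
      ring
    · -- for `a = 0` the quotient `f i / a` is junk, but then `f i = 0`
      have hfa : a = 0 → f i = 0 := fun h0 =>
        le_antisymm (hf i).2 (by simpa [h0] using (hf i).1)
      simp [neg_div, mul_div_cancel_of_imp' hfa]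
  rw [hsplit]
  exact add_mem (PointedCone.smul_mem _ hb (PointedCone.subset_hull (Or.inl rfl)))
    (PointedCone.smul_mem _ ha (mem_hull_nefGenerators_of_mem_unitCube ht))

theorem hull_nefGenerators [Finite ι] [Nonempty ι] :
    PointedCone.hull ℝ (nefGenerators n ι) = nefCone n ι :=
  le_antisymm hull_nefGenerators_le nefCone_le_hull

end

theorem statement11_general (n K : ℕ) (hK : 1 ≤ K) :
    {p : ℝ × ℝ × (Fin K → ℝ) |
        0 ≤ p.2.1 - (n : ℝ) * p.1 ∧ ∀ i, 0 ≤ p.1 + p.2.2 i ∧ p.2.2 i ≤ 0} =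
      coneHull ({((0 : ℝ), (1 : ℝ), (0 : Fin K → ℝ))} ∪
        {p | ∃ α : Fin K → ℝ, (∀ i, α i = 0 ∨ α i = 1) ∧
          p = ((1 : ℝ), (n : ℝ), fun i => -α i)}) := by
  have : Nonempty (Fin K) := ⟨⟨0, hK⟩⟩
  change (nefCone n (Fin K) : Set _) = coneHull (nefGenerators n (Fin K))
  rw [coneHull_eq_hull, hull_nefGenerators]

/-- For `n ≥ 2`, `1 ≤ k < n`, the cone
`C = {(a,b,f) : b − n·a ≥ 0, a + fᵢ ≥ 0, fᵢ ≤ 0}` in `ℝ^{k+2}` is generated by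
`F = (0,1,0)` and the vectors `D_α = (1, n, −α)` for `α ∈ {0,1}^k`. -/
theorem statement11 (n K : ℕ) (hn : 2 ≤ n) (hK : 1 ≤ K) (hKn : K < n) :
    {p : ℝ × ℝ × (Fin K → ℝ) |
        0 ≤ p.2.1 - (n : ℝ) * p.1 ∧ ∀ i, 0 ≤ p.1 + p.2.2 i ∧ p.2.2 i ≤ 0} =
      coneHull ({((0 : ℝ), (1 : ℝ), (0 : Fin K → ℝ))} ∪
        {p | ∃ α : Fin K → ℝ, (∀ i, α i = 0 ∨ α i = 1) ∧
          p = ((1 : ℝ), (n : ℝ), fun i => -α i)}) :=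
  statement11_general n K hK
end

section
/- Let n ≥ 1 be an integer and let β be the symmetric bilinear form on ℝ⁴ with ordered basis (s, e₁, e₂, F) determined by β(s,s) = −n, β(e₁,e₁) = −1, β(e₂,e₂) = −1, β(F,F) = 0, β(s,F) = 1, and β(u,v) = 0 for every other pair of distinct basis vectors. Set f₁ = F − e₁ − e₂. Then {x ∈ ℝ⁴ : β(x, v) ≥ 0 for every v ∈ {s, f₁, e₁, e₂}} = cone({F, nF + s, nF + s − e₁, nF + s − e₂}). -/
/-- The intersection form on `ℝ⁴` in the ordered basis `(s, e₁, e₂, F)` determined by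
`β(s,s)=−n`, `β(e₁,e₁)=−1`, `β(e₂,e₂)=−1`, `β(F,F)=0`, `β(s,F)=1`, and `β = 0` on every
other pair of distinct basis vectors. -/
def interForm13 (n : ℕ) (x y : Fin 4 → ℝ) : ℝ :=
  -(n : ℝ) * (x 0 * y 0) - x 1 * y 1 - x 2 * y 2 + x 0 * y 3 + x 3 * y 0

section ConeDuality

variable {E F : Type*} [AddCommGroup E] [Module ℝ E] [AddCommGroup F] [Module ℝ F]

lemma map_nonneg_of_mem_coneHull {T : Set E} (f : E →ₗ[ℝ] ℝ) (hf : ∀ t ∈ T, 0 ≤ f t)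
    {x : E} (hx : x ∈ coneHull T) : 0 ≤ f x := by
  obtain ⟨m, c, g, hc, hg, rfl⟩ := hx
  rw [map_sum]
  exact Finset.sum_nonneg fun i _ => by
    rw [map_smul, smul_eq_mul]
    exact mul_nonneg (hc i) (hf _ (hg i))

theorem setOf_forall_nonneg_eq_coneHull {m : ℕ} (β : E →ₗ[ℝ] F →ₗ[ℝ] ℝ) (v : Fin m → F)
    (g : Fin m → E) (hpos : ∀ i j, 0 ≤ β (g i) (v j))
    (hrec : ∀ x, x = ∑ i, β x (v i) • g i) :
    {x | ∀ w ∈ Set.range v, 0 ≤ β x w} = coneHull (Set.range g) := by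
  ext x
  constructor
  · intro hx
    exact ⟨m, fun i => β x (v i), g, fun i => hx _ ⟨i, rfl⟩, fun i => ⟨i, rfl⟩, hrec x⟩
  · rintro hx _ ⟨j, rfl⟩
    exact map_nonneg_of_mem_coneHull (β.flip (v j)) (by rintro _ ⟨i, rfl⟩; exact hpos i j) hx

end ConeDuality

lemma Matrix.range_vecCons_four {α : Type*} (a b c d : α) :
    Set.range ![a, b, c, d] = {a, b, c, d} := by
  simp only [Matrix.range_cons, Matrix.range_empty, Set.union_empty, Set.singleton_union]

def interForm13Matrix (n : ℕ) : Matrix (Fin 4) (Fin 4) ℝ :=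
  !![-(n : ℝ), 0, 0, 1; 0, -1, 0, 0; 0, 0, -1, 0; 1, 0, 0, 0]

lemma interForm13_eq_toLinearMap₂' (n : ℕ) (x y : Fin 4 → ℝ) :
    interForm13 n x y = (interForm13Matrix n).toLinearMap₂' ℝ x y := by
  simp [Matrix.toLinearMap₂'_apply', interForm13, interForm13Matrix, dotProduct, Matrix.mulVec,
    Fin.sum_univ_four]
  ring

theorem statement13_general (n : ℕ) :
    {x : Fin 4 → ℝ | ∀ v ∈ ({![1, 0, 0, 0], ![0, -1, -1, 1], ![0, 1, 0, 0],
        ![0, 0, 1, 0]} : Set (Fin 4 → ℝ)), 0 ≤ interForm13 n x v} =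
      coneHull {![0, 0, 0, 1], ![1, 0, 0, (n : ℝ)], ![1, -1, 0, (n : ℝ)],
        ![1, 0, -1, (n : ℝ)]} := by
  rw [← Matrix.range_vecCons_four, ← Matrix.range_vecCons_four]
  simp_rw [interForm13_eq_toLinearMap₂']
  refine setOf_forall_nonneg_eq_coneHull _ _ _ (fun i j => ?_) (fun x => funext fun k => ?_) <;>
    simp only [← interForm13_eq_toLinearMap₂']
  · fin_cases i <;> fin_cases j <;> simp [interForm13]
  · fin_cases k <;> simp [interForm13, Fin.sum_univ_four] <;> ring

/-- With `f₁ = F − e₁ − e₂`, the dual cone of `{s, f₁, e₁, e₂}` with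
respect to the intersection form is generated by `F`, `nF + s`, `nF + s − e₁`,
`nF + s − e₂`. -/
theorem statement13 (n : ℕ) (hn : 1 ≤ n) :
    {x : Fin 4 → ℝ | ∀ v ∈ ({![1, 0, 0, 0], ![0, -1, -1, 1], ![0, 1, 0, 0],
        ![0, 0, 1, 0]} : Set (Fin 4 → ℝ)), 0 ≤ interForm13 n x v} =
      coneHull {![0, 0, 0, 1], ![1, 0, 0, (n : ℝ)], ![1, -1, 0, (n : ℝ)],
        ![1, 0, -1, (n : ℝ)]} :=
  statement13_general n
end
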